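/- Assume that at least one of λ₁, λ₂ is nonzero and that g₂λ₁ − λ₂g₁ ≥ 0. Then every complex number z in the domain ℂ \ (-∞, -4m²] with S(z) = 0 is real, i.e. every such zero lies in the real interval (-4m², ∞). -/

import Mathlib

open MeasureTheory Complex Filter

/-- The half-line `(-∞, -4m²]` viewed as a subset of `ℂ`. -/
def cutSet (m : ℝ) : Set ℂ := {z : ℂ | z.im = 0 ∧ z.re ≤ -4 * m ^ 2}

/-- The function `F_a(z) = ∫_{4m²}^∞ √(1 - 4m²/u) (1/(u+a) - 1/(u+z)) du`. -/
noncomputable def Fa (m a : ℝ) (z : ℂ) : ℂ :=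
  ∫ u in Set.Ioi (4 * m ^ 2), (Real.sqrt (1 - 4 * m ^ 2 / u) : ℂ) *
    (1 / ((u : ℂ) + (a : ℂ)) - 1 / ((u : ℂ) + z))

/-- The function `S(z) = -(λ₁ + λ₂ z) κ F_a(z) - (g₁ + g₂ z)`. -/
noncomputable def Sfun (m a κ g₁ g₂ l₁ l₂ : ℝ) (z : ℂ) : ℂ :=
  -((l₁ : ℂ) + (l₂ : ℂ) * z) * (κ : ℂ) * Fa m a z - ((g₁ : ℂ) + (g₂ : ℂ) * z)

/-
For non-real `z` the integrand of `F_a` has imaginary part `Im z · √(1 - 4m²/u) / |u + z|²`,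
so `Im z · Im F_a(z) > 0`. If `S(z) = 0`, multiplying by the conjugate of `P = λ₁ + λ₂ z`
(nonzero, since `z` is not real) gives `|P|² κ Im F_a(z) = -(g₂λ₁ - λ₂g₁) Im z`; after a further
multiplication by `Im z` the left side is positive and the right side is not.
-/

open Set Asymptotics ComplexConjugate

lemma half_le_norm_ofReal_add {w : ℂ} {u : ℝ} (hu : 2 * ‖w‖ ≤ u) :
    u / 2 ≤ ‖(u : ℂ) + w‖ := by
  have h := norm_sub_norm_le (u : ℂ) (-w)
  rw [sub_neg_eq_add, norm_neg, norm_real, Real.norm_eq_abs] at h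
  linarith [le_abs_self u]

lemma norm_one_div_add_sub_one_div_add_le {w z : ℂ} {u : ℝ} (hu : 0 < u)
    (hwu : 2 * ‖w‖ ≤ u) (hzu : 2 * ‖z‖ ≤ u) :
    ‖1 / ((u : ℂ) + w) - 1 / ((u : ℂ) + z)‖ ≤ 4 * ‖z - w‖ * u ^ (-2 : ℝ) := by
  have hw := half_le_norm_ofReal_add hwu
  have hz := half_le_norm_ofReal_add hzu
  have hw0 : (u : ℂ) + w ≠ 0 := norm_pos_iff.1 (by linarith)
  have hz0 : (u : ℂ) + z ≠ 0 := norm_pos_iff.1 (by linarith)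
  have hdiff : 1 / ((u : ℂ) + w) - 1 / ((u : ℂ) + z) = (z - w) / ((u + w) * (u + z)) := by
    field_simp
    ring
  rw [hdiff]
  calc ‖(z - w) / ((u + w) * (u + z))‖ = ‖z - w‖ / (‖(u : ℂ) + w‖ * ‖(u : ℂ) + z‖) := by
        rw [norm_div, norm_mul]
    _ ≤ ‖z - w‖ / (u / 2 * (u / 2)) := by gcongr
    _ = 4 * ‖z - w‖ * u ^ (-2 : ℝ) := by
        rw [Real.rpow_neg hu.le, Real.rpow_two]
        field_simp
        ring

lemma one_div_add_sub_one_div_add_isBigO (w z : ℂ) :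
    (fun u : ℝ => 1 / ((u : ℂ) + w) - 1 / ((u : ℂ) + z)) =O[atTop] fun u => u ^ (-2 : ℝ) := by
  refine IsBigO.of_bound (4 * ‖z - w‖) ?_
  filter_upwards [eventually_gt_atTop 0, eventually_ge_atTop (2 * ‖w‖),
    eventually_ge_atTop (2 * ‖z‖)] with u hu hwu hzu
  rw [Real.norm_of_nonneg (Real.rpow_nonneg hu.le _)]
  exact norm_one_div_add_sub_one_div_add_le hu hwu hzu

lemma integrableOn_Ici_one_div_add_sub_one_div_add {c : ℝ} {w z : ℂ}
    (hw : ∀ u ≥ c, (u : ℂ) + w ≠ 0) (hz : ∀ u ≥ c, (u : ℂ) + z ≠ 0) :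
    IntegrableOn (fun u : ℝ => 1 / ((u : ℂ) + w) - 1 / ((u : ℂ) + z)) (Ici c) := by
  have hcont : ContinuousOn (fun u : ℝ => 1 / ((u : ℂ) + w) - 1 / ((u : ℂ) + z)) (Ici c) :=
    (continuousOn_const.div (by fun_prop) hw).sub (continuousOn_const.div (by fun_prop) hz)
  exact (hcont.locallyIntegrableOn measurableSet_Ici).integrableOn_of_isBigO_atTop
    (one_div_add_sub_one_div_add_isBigO w z) (integrableAtFilter_rpow_atTop_iff.2 (by norm_num))

lemma ofReal_add_ne_zero_of_im_ne_zero (u : ℝ) {z : ℂ} (hz : z.im ≠ 0) : (u : ℂ) + z ≠ 0 :=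
  fun h => hz (by simpa using congrArg im h)

lemma im_ofReal_mul_one_div_add_sub_one_div_add (ψ u a : ℝ) (z : ℂ) :
    ((ψ : ℂ) * (1 / ((u : ℂ) + a) - 1 / ((u : ℂ) + z))).im
      = z.im * (ψ / normSq ((u : ℂ) + z)) := by
  simp only [mul_im, ofReal_re, ofReal_im, sub_im, one_div, inv_im, add_im, zero_mul,
    add_zero, zero_add, neg_zero, zero_div]
  ring

lemma setIntegral_pos_of_forall_pos {X : Type*} [MeasurableSpace X] {μ : Measure X} {s : Set X}
    {f : X → ℝ} (hs : MeasurableSet s) (hμs : μ s ≠ 0) (hf : ∀ x ∈ s, 0 < f x)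
    (hfi : IntegrableOn f s μ) : 0 < ∫ x in s, f x ∂μ := by
  have hsupp : s ⊆ Function.support f := fun x hx => (hf x hx).ne'
  rw [setIntegral_pos_iff_support_of_nonneg_ae
    ((ae_restrict_iff' hs).2 (ae_of_all _ fun x hx => (hf x hx).le)) hfi, inter_eq_right.2 hsupp]
  exact pos_iff_ne_zero.2 hμs

section Fa

variable {m a : ℝ} {z : ℂ}

lemma integrableOn_Fa_integrand (ha : -4 * m ^ 2 < a) (hz : z.im ≠ 0) :
    IntegrableOn (fun u : ℝ => (Real.sqrt (1 - 4 * m ^ 2 / u) : ℂ) *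
      (1 / ((u : ℂ) + (a : ℂ)) - 1 / ((u : ℂ) + z))) (Ioi (4 * m ^ 2)) := by
  have hkernel := integrableOn_Ici_one_div_add_sub_one_div_add (c := 4 * m ^ 2) (w := a) (z := z)
    (fun u hu h => by
      have hre := congrArg re h
      simp only [add_re, ofReal_re, zero_re] at hre
      linarith)
    (fun u _ => ofReal_add_ne_zero_of_im_ne_zero u hz)
  have hmeas : Measurable fun u : ℝ => (Real.sqrt (1 - 4 * m ^ 2 / u) : ℂ) := by fun_prop
  refine (hkernel.mono_set Ioi_subset_Ici_self).bdd_mul (c := 1) hmeas.aestronglyMeasurable ?_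
  filter_upwards [ae_restrict_mem measurableSet_Ioi] with u hu
  have hu0 : 0 < u := lt_of_le_of_lt (by positivity) hu
  rw [norm_real, Real.norm_of_nonneg (Real.sqrt_nonneg _), Real.sqrt_le_one]
  linarith [div_nonneg (by positivity : (0 : ℝ) ≤ 4 * m ^ 2) hu0.le]

theorem mul_im_Fa_pos (ha : -4 * m ^ 2 < a) (hz : z.im ≠ 0) : 0 < z.im * (Fa m a z).im := by
  have hint := integrableOn_Fa_integrand ha hz
  have hpos : ∀ u ∈ Ioi (4 * m ^ 2), 0 < z.im * ((Real.sqrt (1 - 4 * m ^ 2 / u) : ℂ) *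
      (1 / ((u : ℂ) + (a : ℂ)) - 1 / ((u : ℂ) + z))).im := by
    intro u hu
    have hu0 : 0 < u := lt_of_le_of_lt (by positivity) hu
    have hsqrt : 0 < Real.sqrt (1 - 4 * m ^ 2 / u) :=
      Real.sqrt_pos.2 (by linarith [(div_lt_one hu0).2 (mem_Ioi.1 hu)])
    rw [im_ofReal_mul_one_div_add_sub_one_div_add, ← mul_assoc]
    exact mul_pos (mul_self_pos.2 hz)
      (div_pos hsqrt (normSq_pos.2 (ofReal_add_ne_zero_of_im_ne_zero u hz)))
  calc 0 < ∫ u in Ioi (4 * m ^ 2), z.im * ((Real.sqrt (1 - 4 * m ^ 2 / u) : ℂ) *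
        (1 / ((u : ℂ) + (a : ℂ)) - 1 / ((u : ℂ) + z))).im :=
        setIntegral_pos_of_forall_pos measurableSet_Ioi (by simp) hpos (hint.im.const_mul _)
    _ = z.im * (Fa m a z).im := by
        rw [integral_const_mul, Fa]
        exact congrArg _ (integral_im hint)

end Fa

lemma ofReal_add_ofReal_mul_ne_zero {l₁ l₂ : ℝ} {z : ℂ} (hl : l₁ ≠ 0 ∨ l₂ ≠ 0)
    (hz : z.im ≠ 0) : (l₁ : ℂ) + l₂ * z ≠ 0 := by
  intro h
  have hl₂ : l₂ = 0 := by simpa [hz] using congrArg im h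
  have hl₁ : l₁ = 0 := by simpa [hl₂] using congrArg re h
  tauto

lemma normSq_mul_im_Fa_of_Sfun_eq_zero {m a κ g₁ g₂ l₁ l₂ : ℝ} {z : ℂ}
    (hS : Sfun m a κ g₁ g₂ l₁ l₂ z = 0) :
    normSq ((l₁ : ℂ) + l₂ * z) * κ * (Fa m a z).im = -((l₁ * g₂ - l₂ * g₁) * z.im) := by
  have h : ((normSq ((l₁ : ℂ) + l₂ * z) * κ : ℝ) : ℂ) * Fa m a z
      = -(conj ((l₁ : ℂ) + l₂ * z) * (g₁ + g₂ * z)) := by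
    rw [ofReal_mul, ← mul_conj]
    rw [Sfun] at hS
    linear_combination -(conj ((l₁ : ℂ) + l₂ * z)) * hS
  have him := congrArg im h
  rw [im_ofReal_mul] at him
  rw [him]
  simp only [neg_im, mul_im, mul_re, add_re, add_im, ofReal_re, ofReal_im, conj_re, conj_im]
  ring

theorem stmt_7_general (m a lam hb κ g₁ g₂ l₁ l₂ : ℝ) (ha : -4 * m ^ 2 < a)
    (hlam : 0 < lam) (hhb : 0 < hb) (hκ : κ = lam * hb / (16 * Real.pi ^ 2))
    (hl : l₁ ≠ 0 ∨ l₂ ≠ 0) (hineq : 0 ≤ g₂ * l₁ - l₂ * g₁) :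
    ∀ z : ℂ, z ∉ cutSet m → Sfun m a κ g₁ g₂ l₁ l₂ z = 0 →
      z.im = 0 ∧ -4 * m ^ 2 < z.re := by
  intro z hz hS
  have hκ0 : 0 < κ := hκ ▸ by positivity
  have him : z.im = 0 := by
    by_contra him
    have hP := normSq_pos.2 (ofReal_add_ofReal_mul_ne_zero hl him)
    have hid : normSq ((l₁ : ℂ) + l₂ * z) * κ * (z.im * (Fa m a z).im)
        = -((l₁ * g₂ - l₂ * g₁) * z.im ^ 2) := by
      linear_combination z.im * normSq_mul_im_Fa_of_Sfun_eq_zero hS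
    nlinarith [mul_pos (mul_pos hP hκ0) (mul_im_Fa_pos ha him), mul_nonneg hineq (sq_nonneg z.im)]
  exact ⟨him, not_le.1 fun hre => hz ⟨him, hre⟩⟩

theorem stmt_7 (m a lam hb κ g₁ g₂ l₁ l₂ : ℝ) (hm : 0 < m) (ha : -4 * m ^ 2 < a)
    (hlam : 0 < lam) (hhb : 0 < hb) (hκ : κ = lam * hb / (16 * Real.pi ^ 2))
    (hl : l₁ ≠ 0 ∨ l₂ ≠ 0) (hineq : 0 ≤ g₂ * l₁ - l₂ * g₁) :
    ∀ z : ℂ, z ∉ cutSet m → Sfun m a κ g₁ g₂ l₁ l₂ z = 0 →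
      z.im = 0 ∧ -4 * m ^ 2 < z.re :=
  stmt_7_general m a lam hb κ g₁ g₂ l₁ l₂ ha hlam hhb hκ hl hineq
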